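/- arXiv:2502.11760 — 2 statements merged into one kernel-verified Lean document; each statement's English description precedes it below -/
import Mathlib

section
/- Let a1, a2, a3 be positive integers in arithmetic progression with common difference d > 0 and a1 > d. Let a4 be a positive integer with a4 ∉ {a1, a2, a3} and a4 ∉ {d, 2d, a1 - d, a3 + d, a1 + a2, a1 + a3, a2 + a3, a1 + a2 + a3}. Then {a1, a2, a3, a4} has distinct subset sums. -/
/-- A finite set of naturals has distinct subset sums if the map sending each
subset to the sum of its elements is injective. -/
def DistinctSubsetSums (S : Finset ℕ) : Prop :=
  ∀ A ⊆ S, ∀ B ⊆ S, A.sum id = B.sum id → A = B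

set_option maxHeartbeats 2000000 in
theorem ap_three_plus_fourth_distinct_subset_sums (a₁ d a₄ : ℕ)
    (hd : 0 < d) (ha : d < a₁) (h4 : 0 < a₄)
    (hne : a₄ ∉ ({a₁, a₁ + d, a₁ + 2 * d} : Finset ℕ))
    (hbad : a₄ ∉ ({d, 2 * d, a₁ - d, (a₁ + 2 * d) + d, a₁ + (a₁ + d),
      a₁ + (a₁ + 2 * d), (a₁ + d) + (a₁ + 2 * d),
      a₁ + (a₁ + d) + (a₁ + 2 * d)} : Finset ℕ)) :
    DistinctSubsetSums {a₁, a₁ + d, a₁ + 2 * d, a₄} := by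
  intro A hA B hB hsum
  simp only [Finset.mem_insert, Finset.mem_singleton, not_or] at hne hbad
  obtain ⟨n1, n2, n3⟩ := hne
  obtain ⟨c1, c2, c3, c4, c5, c6, c7, c8⟩ := hbad
  have key : ∀ C : Finset ℕ, C ⊆ {a₁, a₁ + d, a₁ + 2 * d, a₄} →
      C.sum id = (if a₁ ∈ C then a₁ else 0) + (if a₁ + d ∈ C then a₁ + d else 0)
        + (if a₁ + 2 * d ∈ C then a₁ + 2 * d else 0) + (if a₄ ∈ C then a₄ else 0) := by
    intro C hC
    have hCe : C = ({a₁, a₁ + d, a₁ + 2 * d, a₄} : Finset ℕ).filter (· ∈ C) := by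
      ext x
      simp only [Finset.mem_filter]
      exact ⟨fun hx => ⟨hC hx, hx⟩, fun hx => hx.2⟩
    conv_lhs => rw [hCe]
    rw [Finset.sum_filter]
    rw [Finset.sum_insert (by simp only [Finset.mem_insert, Finset.mem_singleton]; push_neg; omega)]
    rw [Finset.sum_insert (by simp only [Finset.mem_insert, Finset.mem_singleton]; push_neg; omega)]
    rw [Finset.sum_insert (by simp only [Finset.mem_singleton]; omega)]
    rw [Finset.sum_singleton]
    simp only [id_eq]
    ring
  rw [key A hA, key B hB] at hsum
  have mem : (a₁ ∈ A ↔ a₁ ∈ B) ∧ (a₁ + d ∈ A ↔ a₁ + d ∈ B)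
      ∧ (a₁ + 2 * d ∈ A ↔ a₁ + 2 * d ∈ B) ∧ (a₄ ∈ A ↔ a₄ ∈ B) := by
    by_cases p1 : a₁ ∈ A <;> by_cases p2 : a₁ + d ∈ A <;>
      by_cases p3 : a₁ + 2 * d ∈ A <;> by_cases p4 : a₄ ∈ A <;>
      by_cases q1 : a₁ ∈ B <;> by_cases q2 : a₁ + d ∈ B <;>
      by_cases q3 : a₁ + 2 * d ∈ B <;> by_cases q4 : a₄ ∈ B <;>
      simp only [p1, p2, p3, p4, q1, q2, q3, q4, if_true, if_false, if_pos, if_neg,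
        not_false_iff, iff_self, true_iff, iff_true, false_iff, iff_false,
        not_true, not_false_eq_true, and_true, true_and, if_true] at hsum ⊢ <;>
      omega
  obtain ⟨m1, m2, m3, m4⟩ := mem
  ext x
  constructor <;> intro hx
  · have hxS := hA hx
    simp only [Finset.mem_insert, Finset.mem_singleton] at hxS
    rcases hxS with h | h | h | h <;> subst h <;>
      first
        | exact m1.mp hx | exact m2.mp hx | exact m3.mp hx | exact m4.mp hx
  · have hxS := hB hx
    simp only [Finset.mem_insert, Finset.mem_singleton] at hxS
    rcases hxS with h | h | h | h <;> subst h <;>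
      first
        | exact m1.mpr hx | exact m2.mpr hx | exact m3.mpr hx | exact m4.mpr hx
end

section
/- Every cubic (3-regular) graph G on n vertices admits an AR-labeling f : E(G) → {1, 2, ..., 3n - 1}, namely one using only odd labels. -/
open SimpleGraph Finset

/-- The finset of edges of `G` incident to the vertex `v`. -/
def incidentEdges {V : Type*} [Fintype V] [DecidableEq V] (G : SimpleGraph V)
    [DecidableRel G.Adj] (v : V) : Finset (Sym2 V) :=
  G.edgeFinset.filter (fun e => v ∈ e)

/-- `v` is an AR-vertex under the edge labeling `f` if distinct subsets of
the edges incident to `v` have distinct label sums. -/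
def IsARVertex {V : Type*} [Fintype V] [DecidableEq V] (G : SimpleGraph V)
    [DecidableRel G.Adj] (f : Sym2 V → ℕ) (v : V) : Prop :=
  ∀ A ⊆ incidentEdges G v, ∀ B ⊆ incidentEdges G v, A.sum f = B.sum f → A = B

/-- `f` is an AR-labeling of `G`: injective on edges, positive on edges, and
every vertex is an AR-vertex. -/
def IsARLabeling {V : Type*} [Fintype V] [DecidableEq V] (G : SimpleGraph V)
    [DecidableRel G.Adj] (f : Sym2 V → ℕ) : Prop :=
  Set.InjOn f G.edgeSet ∧ (∀ e ∈ G.edgeFinset, 0 < f e) ∧ ∀ v : V, IsARVertex G f v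

/-! Label the `3n/2` edges injectively with the odd numbers `1, 3, …, 3n - 1`. Two distinct
subsets of the three edges at a vertex with equal label sums may be taken disjoint. Their sums
are nonzero unless both are empty, their sizes have the same parity, and together they have at
most three elements, so both are singletons, contradicting injectivity. -/

namespace Finset

lemma sum_sdiff_eq_sum_sdiff_of_sum_eq {α M : Type*} [DecidableEq α] [AddCancelCommMonoid M]
    {f : α → M} {A B : Finset α} (h : ∑ a ∈ A, f a = ∑ b ∈ B, f b) :
    ∑ a ∈ A \ B, f a = ∑ b ∈ B \ A, f b := by
  rw [← sum_inter_add_sum_sdiff A B, ← sum_inter_add_sum_sdiff B A, inter_comm] at h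
  exact add_left_cancel h

lemma even_sum_iff_even_card_of_forall_odd {α : Type*} {s : Finset α} {f : α → ℕ}
    (hodd : ∀ a ∈ s, Odd (f a)) : Even (∑ a ∈ s, f a) ↔ Even #s := by
  rw [even_sum_iff_even_card_odd, filter_true_of_mem hodd]

lemma exists_injOn_odd_lt_two_mul_card {α : Type*} (s : Finset α) :
    ∃ f : α → ℕ, Set.InjOn f s ∧ ∀ a ∈ s, Odd (f a) ∧ f a < 2 * #s := by
  classical
  refine ⟨fun a => if h : a ∈ s then 2 * (s.equivFin ⟨a, h⟩ : ℕ) + 1 else 0, ?_, ?_⟩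
  · intro a ha b hb hab
    simp only [mem_coe] at ha hb
    simpa only [dif_pos ha, dif_pos hb, add_left_inj, mul_right_inj' two_ne_zero,
      Fin.val_inj, EmbeddingLike.apply_eq_iff_eq, Subtype.mk.injEq] using hab
  · intro a ha
    have hlt := (s.equivFin ⟨a, ha⟩).isLt
    simp only [dif_pos ha]
    exact ⟨odd_two_mul_add_one _, by omega⟩

section OddLabels

variable {α : Type*} [DecidableEq α] {s A B : Finset α} {f : α → ℕ}

lemma eq_empty_of_disjoint_of_sum_eq_of_odd (hs : #s ≤ 3) (hodd : ∀ a ∈ s, Odd (f a))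
    (hinj : Set.InjOn f s) (hA : A ⊆ s) (hB : B ⊆ s) (hdisj : Disjoint A B)
    (h : ∑ a ∈ A, f a = ∑ b ∈ B, f b) : A = ∅ ∧ B = ∅ := by
  have empty_of_sum_eq_zero : ∀ C ⊆ s, ∑ c ∈ C, f c = 0 → C = ∅ := by
    intro C hC hzero
    refine eq_empty_of_forall_notMem fun c hc => ?_
    have := (sum_eq_zero_iff.mp hzero) c hc
    exact Nat.not_even_iff_odd.mpr (hodd c (hC hc)) (this ▸ Even.zero)
  rcases A.eq_empty_or_nonempty with rfl | hAne
  · exact ⟨rfl, empty_of_sum_eq_zero B hB (by simpa using h.symm)⟩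
  rcases B.eq_empty_or_nonempty with rfl | hBne
  · exact absurd (empty_of_sum_eq_zero A hA (by simpa using h)) hAne.ne_empty
  have hcard : #A + #B ≤ 3 :=
    (card_union_of_disjoint hdisj).symm.trans_le ((card_le_card (union_subset hA hB)).trans hs)
  have hparity : Even #A ↔ Even #B := by
    rw [← even_sum_iff_even_card_of_forall_odd (fun a ha => hodd a (hA ha)),
      ← even_sum_iff_even_card_of_forall_odd (fun b hb => hodd b (hB hb)), h]
  obtain ⟨a, rfl⟩ : ∃ a, A = {a} := card_eq_one.mp <| by
    have := hAne.card_pos; have := hBne.card_pos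
    simp only [Nat.even_iff] at hparity; omega
  obtain ⟨b, rfl⟩ : ∃ b, B = {b} := card_eq_one.mp <| by
    have := hBne.card_pos
    simp only [card_singleton, Nat.even_iff] at hparity hcard; omega
  simp only [sum_singleton] at h
  have hab : a = b := hinj (hA (mem_singleton_self a)) (hB (mem_singleton_self b)) h
  exact absurd hab (disjoint_singleton.mp hdisj)

lemma eq_of_sum_eq_of_odd_of_card_le_three (hs : #s ≤ 3) (hodd : ∀ a ∈ s, Odd (f a))
    (hinj : Set.InjOn f s) (hA : A ⊆ s) (hB : B ⊆ s) (h : ∑ a ∈ A, f a = ∑ b ∈ B, f b) :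
    A = B := by
  obtain ⟨hAB, hBA⟩ := eq_empty_of_disjoint_of_sum_eq_of_odd hs hodd hinj
    (sdiff_subset.trans hA) (sdiff_subset.trans hB) disjoint_sdiff_sdiff
    (sum_sdiff_eq_sum_sdiff_of_sum_eq h)
  exact Subset.antisymm (sdiff_eq_empty_iff_subset.mp hAB) (sdiff_eq_empty_iff_subset.mp hBA)

end OddLabels

end Finset

namespace SimpleGraph

variable {V : Type*} [Fintype V] {G : SimpleGraph V} [DecidableRel G.Adj]

lemma incidentEdges_eq_incidenceFinset [DecidableEq V] (v : V) :
    incidentEdges G v = G.incidenceFinset v :=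
  (G.incidenceFinset_eq_filter v).symm

lemma IsRegularOfDegree.two_mul_card_edgeFinset {d : ℕ} (h : G.IsRegularOfDegree d) :
    2 * #G.edgeFinset = d * Fintype.card V := by
  rw [← G.sum_degrees_eq_twice_card_edges, sum_congr rfl fun v _ => h.degree_eq v,
    sum_const, card_univ, smul_eq_mul, mul_comm]

end SimpleGraph

theorem cubic_graph_has_odd_AR_labeling {V : Type*} [Fintype V] [DecidableEq V]
    (G : SimpleGraph V) [DecidableRel G.Adj]
    (hcubic : ∀ v : V, G.degree v = 3) :
    ∃ f : Sym2 V → ℕ, IsARLabeling G f ∧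
      ∀ e ∈ G.edgeFinset, Odd (f e) ∧ f e ∈ Finset.Icc 1 (3 * Fintype.card V - 1) := by
  obtain ⟨f, hinj, hf⟩ := G.edgeFinset.exists_injOn_odd_lt_two_mul_card
  have hedges : 2 * #G.edgeFinset = 3 * Fintype.card V :=
    IsRegularOfDegree.two_mul_card_edgeFinset hcubic
  have hbound : ∀ e ∈ G.edgeFinset, Odd (f e) ∧ f e ∈ Icc 1 (3 * Fintype.card V - 1) := by
    intro e he
    obtain ⟨hodd, hlt⟩ := hf e he
    exact ⟨hodd, mem_Icc.mpr ⟨hodd.pos, by omega⟩⟩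
  refine ⟨f, ⟨by rwa [← coe_edgeFinset], fun e he => (hf e he).1.pos, ?_⟩, hbound⟩
  intro v A hA B hB hsum
  have hsub : incidentEdges G v ⊆ G.edgeFinset := filter_subset _ _
  refine eq_of_sum_eq_of_odd_of_card_le_three ?_ (fun e he => (hf e (hsub he)).1)
    (hinj.mono (by exact_mod_cast hsub)) hA hB hsum
  rw [incidentEdges_eq_incidenceFinset, card_incidenceFinset_eq_degree, hcubic v]
end
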